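/- Let a, b, c > 0 satisfy the triangle inequalities with a < b, and suppose a + b + c < 2π and the triangle fits in an open hemisphere. Let S be the area of the spherical triangle with sides a, b, c and S′ the area of the spherical isosceles triangle with sides (a+b)/2, (a+b)/2, c. Then S < S′. -/

import Mathlib

open Real

/-- Spherical (great-circle) distance between points of the unit sphere in `ℝ³`. -/
noncomputable def sdist (u v : EuclideanSpace ℝ (Fin 3)) : ℝ :=
  Real.arccos (inner ℝ u v : ℝ)

/-- The area of the spherical triangle with side lengths `a, b, c`, computed via
Lhuilier's formula `tan²(S/4) = tan(s/2)·tan((s-a)/2)·tan((s-b)/2)·tan((s-c)/2)`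
with `s = (a+b+c)/2`. -/
noncomputable def sLhuilierArea (a b c : ℝ) : ℝ :=
  4 * Real.arctan (Real.sqrt (Real.tan ((a + b + c) / 4) * Real.tan ((b + c - a) / 4) *
    Real.tan ((c + a - b) / 4) * Real.tan ((a + b - c) / 4)))

/-!
Put `x = (s - a)/2` and `y = (s - b)/2` in Lhuilier's formula. Averaging `a` and `b` keeps
`s` and `s - c` fixed and replaces `x, y` by their mean `c/4`, so it suffices that
`tan x · tan y` increases strictly under this replacement. By the product-to-sum formulas,
`tan x · tan y = (cos (x - y) - cos (x + y)) / (cos (x - y) + cos (x + y))`, which for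
fixed `x + y = c/2 < π/2` is strictly increasing in `cos (x - y)`, so it is
largest when `x = y`.
-/

open Set

namespace Real

theorem tan_mul_tan_eq {x y : ℝ} (hx : cos x ≠ 0) (hy : cos y ≠ 0) :
    tan x * tan y = (cos (x - y) - cos (x + y)) / (cos (x - y) + cos (x + y)) := by
  rw [← two_mul_cos_mul_cos, tan_eq_sin_div_cos, tan_eq_sin_div_cos, cos_sub, cos_add]
  field_simp
  ring

theorem tan_mul_tan_lt_tan_half_add_sq {x y : ℝ} (hx : x ∈ Ioo (-(π / 2)) (π / 2))
    (hy : y ∈ Ioo (-(π / 2)) (π / 2)) (hxy : x + y ∈ Ioo (-(π / 2)) (π / 2)) (hne : x ≠ y) :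
    tan x * tan y < tan ((x + y) / 2) ^ 2 := by
  have hcx : 0 < cos x := cos_pos_of_mem_Ioo hx
  have hcy : 0 < cos y := cos_pos_of_mem_Ioo hy
  have hcm : 0 < cos ((x + y) / 2) :=
    cos_pos_of_mem_Ioo ⟨by linarith [hxy.1, pi_pos], by linarith [hxy.2, pi_pos]⟩
  have hC : 0 < cos (x + y) := cos_pos_of_mem_Ioo hxy
  have ht : cos (x - y) < 1 := by
    refine (cos_le_one _).lt_of_ne fun h => hne ?_
    have := (cos_eq_one_iff_of_lt_of_lt (by linarith [hx.1, hy.2, pi_pos])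
      (by linarith [hx.2, hy.1, pi_pos])).mp h
    linarith
  have hsum : 0 < cos (x - y) + cos (x + y) := by
    rw [← two_mul_cos_mul_cos]; positivity
  rw [sq, tan_mul_tan_eq hcx.ne' hcy.ne', tan_mul_tan_eq hcm.ne' hcm.ne', sub_self, add_halves,
    cos_zero, div_lt_div_iff₀ hsum (by linarith)]
  nlinarith [mul_pos hC (sub_pos.mpr ht)]

end Real

theorem strictMonoOn_four_mul_arctan_sqrt :
    StrictMonoOn (fun t => 4 * arctan (√t)) (Ici 0) := fun _ hs _ _ hst => by
  simpa using arctan_strictMono (sqrt_lt_sqrt hs hst)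

theorem spherical_average_increases_area_general (a b c : ℝ) (hab : a < b)
    (htri₁ : a + b > c) (htri₃ : c + a > b)
    (hperi : a + b + c < 2 * π) :
    sLhuilierArea a b c < sLhuilierArea ((a + b) / 2) ((a + b) / 2) c := by
  have hpi := pi_pos
  have tan_pos {t : ℝ} (h₀ : 0 < t) (h₁ : t < π / 2) : 0 < tan t :=
    tan_pos_of_pos_of_lt_pi_div_two h₀ h₁
  have key : tan ((b + c - a) / 4) * tan ((c + a - b) / 4) < tan (c / 4) ^ 2 := by
    have := tan_mul_tan_lt_tan_half_add_sq (x := (b + c - a) / 4) (y := (c + a - b) / 4)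
      ⟨by linarith, by linarith⟩ ⟨by linarith, by linarith⟩ ⟨by linarith, by linarith⟩
      (fun h => by linarith)
    rwa [show ((b + c - a) / 4 + (c + a - b) / 4) / 2 = c / 4 by ring] at this
  have hs := tan_pos (t := (a + b + c) / 4) (by linarith) (by linarith)
  have hx := tan_pos (t := (b + c - a) / 4) (by linarith) (by linarith)
  have hy := tan_pos (t := (c + a - b) / 4) (by linarith) (by linarith)
  have hz := tan_pos (t := (a + b - c) / 4) (by linarith) (by linarith)
  unfold sLhuilierArea
  rw [show ((a + b) / 2 + (a + b) / 2 + c) / 4 = (a + b + c) / 4 by ring,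
    show ((a + b) / 2 + c - (a + b) / 2) / 4 = c / 4 by ring,
    show (c + (a + b) / 2 - (a + b) / 2) / 4 = c / 4 by ring,
    show ((a + b) / 2 + (a + b) / 2 - c) / 4 = (a + b - c) / 4 by ring]
  have hm := tan_pos (t := c / 4) (by linarith) (by linarith)
  refine strictMonoOn_four_mul_arctan_sqrt (mem_Ici.2 (by positivity))
    (mem_Ici.2 (by positivity)) ?_
  nlinarith [mul_lt_mul_of_pos_left key (mul_pos hs hz)]

/-- Averaging two unequal sides of a spherical triangle (in an open hemisphere), keeping the
third side fixed, strictly increases the area. -/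
theorem spherical_average_increases_area (a b c : ℝ)
    (ha : 0 < a) (hb : 0 < b) (hc : 0 < c) (hab : a < b)
    (htri₁ : a + b > c) (htri₂ : b + c > a) (htri₃ : c + a > b)
    (hperi : a + b + c < 2 * π)
    (hhemi : ∃ u v w p : EuclideanSpace ℝ (Fin 3),
      ‖u‖ = 1 ∧ ‖v‖ = 1 ∧ ‖w‖ = 1 ∧ ‖p‖ = 1 ∧
      sdist u v = a ∧ sdist v w = b ∧ sdist w u = c ∧
      0 < (inner ℝ p u : ℝ) ∧ 0 < (inner ℝ p v : ℝ) ∧ 0 < (inner ℝ p w : ℝ)) :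
    sLhuilierArea a b c < sLhuilierArea ((a + b) / 2) ((a + b) / 2) c :=
  spherical_average_increases_area_general a b c hab htri₁ htri₃ hperi
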